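/- arXiv:2005.12365 — 2 statements merged into one kernel-verified Lean document; each statement's English description precedes it below -/
import Mathlib

section
/- Every free group is residually nilpotent, i.e., the intersection of all terms of its lower central series of a free group is trivial. -/
/-!
Write `g ≠ 1` in syllable form `x₁ ^ e₁ ⋯ x_k ^ e_k` with `xⱼ ≠ xⱼ₊₁` and all `eⱼ ≠ 0`. Let a
generator `x` act on `ℕ → ℤ` by `1 + N_x`, where `(N_x f) i = f (i + 1)` if the `i`-th label of
`x₁, …, x_k` is `x` and `0` otherwise. Consecutive labels differ, so `N_x ^ 2 = 0` and `x ^ e`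
acts as `1 + e • N_x`; hence `g` sends the indicator of `k` to a function whose value at `0` is
`e₁ ⋯ e_k ≠ 0`. On the other hand each `N_x` raises the filtration "`(O f) i` only depends on `f`
beyond `i + d`" by one, so by the commutator calculus of dimension subgroups every element of the
`k`-th term of the lower central series acts trivially at that coordinate.
-/

open scoped commutatorElement

structure DescendingRingFiltration (R : Type*) [Ring R] where
  F : ℕ → AddSubgroup R
  antitone : Antitone F
  mul_mem {m n : ℕ} {a b : R} : a ∈ F m → b ∈ F n → a * b ∈ F (m + n)

namespace DescendingRingFiltration

variable {R : Type*} [Ring R] (𝓕 : DescendingRingFiltration R)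

lemma mul_sub_one_mem {n : ℕ} {a b : R} (ha : a - 1 ∈ 𝓕.F n) (hb : b - 1 ∈ 𝓕.F n) :
    a * b - 1 ∈ 𝓕.F n := by
  have hab : a * b - 1 = (a - 1) * (b - 1) + (a - 1) + (b - 1) := by noncomm_ring
  rw [hab]
  exact add_mem (add_mem (𝓕.antitone (Nat.le_add_left n n) (𝓕.mul_mem ha hb)) ha) hb

def dimensionSubgroup (n : ℕ) : Subgroup Rˣ where
  carrier := {u | (u : R) - 1 ∈ 𝓕.F n ∧ ((u⁻¹ : Rˣ) : R) - 1 ∈ 𝓕.F n}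
  one_mem' := by simp
  mul_mem' := fun ⟨ha, ha'⟩ ⟨hb, hb'⟩ =>
    ⟨𝓕.mul_sub_one_mem ha hb, by simpa using 𝓕.mul_sub_one_mem hb' ha'⟩
  inv_mem' := fun ⟨h, h'⟩ => ⟨h', by simpa using h⟩

variable {𝓕}

lemma dimensionSubgroup_antitone : Antitone 𝓕.dimensionSubgroup :=
  fun _ _ hmn _ ⟨h, h'⟩ => ⟨𝓕.antitone hmn h, 𝓕.antitone hmn h'⟩

lemma commutatorElement_sub_one_mem {m n : ℕ} {a b : Rˣ} (ha : a ∈ 𝓕.dimensionSubgroup m)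
    (hb : b ∈ 𝓕.dimensionSubgroup n) : ((⁅a, b⁆ : Rˣ) : R) - 1 ∈ 𝓕.F (m + n) := by
  have hc : a⁻¹ * b⁻¹ ∈ 𝓕.dimensionSubgroup 0 :=
    Subgroup.mul_mem _ (inv_mem (dimensionSubgroup_antitone (Nat.zero_le m) ha))
      (inv_mem (dimensionSubgroup_antitone (Nat.zero_le n) hb))
  have hab : (a * b - b * a : R) ∈ 𝓕.F (m + n) := by
    have h : (a * b - b * a : R) = (a - 1) * (b - 1) - (b - 1) * (a - 1) := by noncomm_ring
    rw [h]
    exact sub_mem (𝓕.mul_mem ha.1 hb.1) (add_comm n m ▸ 𝓕.mul_mem hb.1 ha.1)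
  have h : ((⁅a, b⁆ : Rˣ) : R) - 1 =
      (a * b - b * a) + (a * b - b * a) * (((a⁻¹ * b⁻¹ : Rˣ) : R) - 1) := by
    simp [commutatorElement_def, mul_sub, sub_mul, mul_assoc]
  rw [h]
  exact add_mem hab (𝓕.mul_mem (n := 0) hab hc.1)

lemma commutatorElement_mem {m n : ℕ} {a b : Rˣ} (ha : a ∈ 𝓕.dimensionSubgroup m)
    (hb : b ∈ 𝓕.dimensionSubgroup n) : ⁅a, b⁆ ∈ 𝓕.dimensionSubgroup (m + n) :=
  ⟨commutatorElement_sub_one_mem ha hb, by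
    rw [commutatorElement_inv, add_comm]; exact commutatorElement_sub_one_mem hb ha⟩

lemma lowerCentralSeries_le_comap_dimensionSubgroup {G : Type*} [Group G] {μ : G →* Rˣ}
    (hμ : ∀ g, μ g ∈ 𝓕.dimensionSubgroup 1) (n : ℕ) :
    (⊤ : Subgroup G).lowerCentralSeries n ≤ (𝓕.dimensionSubgroup (n + 1)).comap μ :=
  Subgroup.descending_central_series_ge_lower (fun k => (𝓕.dimensionSubgroup (k + 1)).comap μ)
    ⟨eq_top_iff.2 fun g _ => hμ g, fun x n hx g => by
      simpa [map_commutatorElement] using commutatorElement_mem hx (hμ g)⟩ n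

end DescendingRingFiltration

namespace FreeGroup

variable {α : Type*}

def syllableProd (L : List (α × ℤ)) : FreeGroup α :=
  (L.map fun p => of p.1 ^ p.2).prod

def IsReducedSyllables (L : List (α × ℤ)) : Prop :=
  (L.map Prod.fst).IsChain (· ≠ ·) ∧ ∀ p ∈ L, p.2 ≠ 0

lemma exists_isReducedSyllables_zpow_mul [DecidableEq α] (x : α) {n : ℤ} (hn : n ≠ 0)
    {L : List (α × ℤ)} (hL : IsReducedSyllables L) :
    ∃ L', IsReducedSyllables L' ∧ syllableProd L' = of x ^ n * syllableProd L := by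
  obtain ⟨hchain, hexp⟩ := hL
  match L, hchain, hexp with
  | [], _, _ => exact ⟨[(x, n)], ⟨by simp, by simpa using hn⟩, by simp [syllableProd]⟩
  | (y, e) :: L, hchain, hexp =>
    rw [List.map_cons] at hchain
    by_cases hyx : y = x
    · subst hyx
      by_cases hne : n + e = 0
      · refine ⟨L, ⟨hchain.tail, fun p hp => hexp p (by simp [hp])⟩, ?_⟩
        simp [syllableProd, ← mul_assoc, ← zpow_add, hne]
      · refine ⟨(y, n + e) :: L, ⟨by simpa using hchain, ?_⟩, ?_⟩
        · simpa [hne] using fun a b h => hexp (a, b) (by simp [h])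
        · simp [syllableProd, ← mul_assoc, ← zpow_add]
    · refine ⟨(x, n) :: (y, e) :: L, ⟨?_, ?_⟩, by simp [syllableProd]⟩
      · simpa [List.isChain_cons_cons, Ne.symm hyx] using hchain
      · simpa [hn] using hexp

lemma exists_isReducedSyllables (g : FreeGroup α) :
    ∃ L, IsReducedSyllables L ∧ syllableProd L = g := by
  classical
  induction (closure_range_of α).ge (Subgroup.mem_top g) using Subgroup.closure_induction_left with
  | one => exact ⟨[], ⟨by simp, by simp⟩, rfl⟩
  | mul_left _ hx _ _ ih =>
    obtain ⟨x, rfl⟩ := hx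
    obtain ⟨L, hL, rfl⟩ := ih
    simpa using exists_isReducedSyllables_zpow_mul x one_ne_zero hL
  | inv_mul_cancel _ hx _ _ ih =>
    obtain ⟨x, rfl⟩ := hx
    obtain ⟨L, hL, rfl⟩ := ih
    simpa using exists_isReducedSyllables_zpow_mul x (neg_ne_zero.2 one_ne_zero) hL

end FreeGroup

section TailFiltration

variable (R M : Type*) [Semiring R] [AddCommGroup M] [Module R M]

def tailFiltration : DescendingRingFiltration (Module.End R (ℕ → M)) where
  F k :=
    { carrier := {O | ∀ f g i, (∀ j, i + k ≤ j → f j = g j) → O f i = O g i}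
      zero_mem' := fun _ _ _ _ => rfl
      add_mem' := fun hO hP f g i h => by simp [hO f g i h, hP f g i h]
      neg_mem' := fun hO f g i h => by simp [hO f g i h] }
  antitone _ _ hkl _ hO f g i h := hO f g i fun j hj => h j (by omega)
  mul_mem hO hP f g i h :=
    hO _ _ i fun j hj => hP f g j fun l hl => h l (by omega)

variable {R M}

lemma apply_eq_self_of_mem_dimensionSubgroup {k : ℕ} {u : (Module.End R (ℕ → M))ˣ}
    (hu : u ∈ (tailFiltration R M).dimensionSubgroup k) {f : ℕ → M} {i : ℕ}
    (hf : ∀ j, i + k ≤ j → f j = 0) : (u : Module.End R (ℕ → M)) f i = f i := by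
  simpa [sub_eq_zero] using hu.1 f 0 i hf

end TailFiltration

lemma List.IsChain.getElem?_succ_ne {α : Type*} {s : List α} (hs : s.IsChain (· ≠ ·))
    {i : ℕ} {x : α} (hx : s[i]? = some x) : s[i + 1]? ≠ some x := by
  induction s generalizing i with
  | nil => simp at hx
  | cons y s ih =>
    cases i with
    | zero =>
      cases s with
      | nil => simp
      | cons z s =>
        simp only [List.getElem?_cons_zero, List.getElem?_cons_succ, Option.some.injEq] at hx ⊢
        exact fun hzx => (List.isChain_cons_cons.1 hs).1 (hx.trans (Option.some_inj.1 hzx).symm)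
    | succ i => exact ih hs.tail hx

section PathRepresentation

variable {α : Type*} [DecidableEq α]

def pathShift (s : List α) (x : α) : Module.End ℤ (ℕ → ℤ) where
  toFun f i := if s[i]? = some x then f (i + 1) else 0
  map_add' f g := by ext i; split_ifs <;> simp [*]
  map_smul' c f := by ext i; split_ifs <;> simp [*]

lemma pathShift_apply (s : List α) (x : α) (f : ℕ → ℤ) (i : ℕ) :
    pathShift s x f i = if s[i]? = some x then f (i + 1) else 0 := rfl

lemma pathShift_mem (s : List α) (x : α) : pathShift s x ∈ (tailFiltration ℤ ℤ).F 1 :=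
  fun f g i h => by simp [pathShift_apply, h (i + 1) le_rfl]

lemma pathShift_mul_self {s : List α} (hs : s.IsChain (· ≠ ·)) (x : α) :
    pathShift s x * pathShift s x = 0 := by
  ext f i
  simp only [Module.End.mul_apply, pathShift_apply, LinearMap.zero_apply, Pi.zero_apply]
  split_ifs with h1 h2 <;> first | rfl | exact absurd h2 (hs.getElem?_succ_ne h1)

def pathUnit {s : List α} (hs : s.IsChain (· ≠ ·)) (x : α) : (Module.End ℤ (ℕ → ℤ))ˣ where
  val := 1 + pathShift s x
  inv := 1 - pathShift s x
  val_inv := by rw [← sub_eq_zero]; noncomm_ring; simp [pathShift_mul_self hs]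
  inv_val := by rw [← sub_eq_zero]; noncomm_ring; simp [pathShift_mul_self hs]

lemma pathUnit_mem {s : List α} (hs : s.IsChain (· ≠ ·)) (x : α) :
    pathUnit hs x ∈ (tailFiltration ℤ ℤ).dimensionSubgroup 1 :=
  ⟨by simpa [pathUnit] using pathShift_mem s x, by simpa [pathUnit] using pathShift_mem s x⟩

lemma val_pathUnit_zpow {s : List α} (hs : s.IsChain (· ≠ ·)) (x : α) (e : ℤ) :
    ((pathUnit hs x ^ e : (Module.End ℤ (ℕ → ℤ))ˣ) : Module.End ℤ (ℕ → ℤ)) =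
      1 + e • pathShift s x := by
  have hN := pathShift_mul_self hs x
  induction e using Int.induction_on with
  | zero => simp
  | succ e ih =>
    rw [zpow_add_one, Units.val_mul, ih]
    simp [pathUnit, mul_add, add_mul, add_smul, mul_assoc, hN, add_assoc]
  | pred e ih =>
    rw [zpow_sub_one, Units.val_mul, ih]
    simp [pathUnit, mul_sub, add_mul, sub_smul, mul_assoc, hN, add_sub_assoc]

def pathRep {s : List α} (hs : s.IsChain (· ≠ ·)) : FreeGroup α →* (Module.End ℤ (ℕ → ℤ))ˣ :=
  FreeGroup.lift (pathUnit hs)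

lemma pathRep_mem {s : List α} (hs : s.IsChain (· ≠ ·)) (g : FreeGroup α) :
    pathRep hs g ∈ (tailFiltration ℤ ℤ).dimensionSubgroup 1 := by
  induction g with
  | C1 => simp
  | of x => simpa [pathRep] using pathUnit_mem hs x
  | inv_of x hx => simpa using inv_mem hx
  | mul g h hg hh => simpa using mul_mem hg hh

def pathProd (s : List α) (L : List (α × ℤ)) : Module.End ℤ (ℕ → ℤ) :=
  (L.map fun p => 1 + p.2 • pathShift s p.1).prod

lemma pathProd_cons_apply (s : List α) (p : α × ℤ) (L : List (α × ℤ)) (f : ℕ → ℤ) (i : ℕ) :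
    pathProd s (p :: L) f i =
      pathProd s L f i + p.2 * if s[i]? = some p.1 then pathProd s L f (i + 1) else 0 := by
  simp [pathProd, Module.End.mul_apply, pathShift_apply]

lemma pathProd_apply_single_of_lt (s : List α) (L : List (α × ℤ)) {i k : ℕ}
    (h : i + L.length < k) : pathProd s L (Pi.single k 1) i = 0 := by
  induction L generalizing i with
  | nil => simp [pathProd, Pi.single_eq_of_ne (show i ≠ k by simp at h; omega)]
  | cons p L ih =>
    simp only [List.length_cons] at h
    rw [pathProd_cons_apply, ih (by omega), ih (by omega)]
    simp

lemma pathProd_apply_single (s : List α) (L : List (α × ℤ)) {i : ℕ}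
    (h : L.map Prod.fst <+: s.drop i) :
    pathProd s L (Pi.single (i + L.length) 1) i = (L.map Prod.snd).prod := by
  induction L generalizing i with
  | nil => simp [pathProd]
  | cons p L ih =>
    obtain ⟨t, ht⟩ := h
    have hi : s[i]? = some p.1 := by rw [← List.head?_drop, ← ht]; rfl
    have hL : L.map Prod.fst <+: s.drop (i + 1) :=
      ⟨t, by rw [← List.tail_drop, ← ht]; rfl⟩
    rw [pathProd_cons_apply, pathProd_apply_single_of_lt s L (by simp), if_pos hi,
      show i + (p :: L).length = i + 1 + L.length by simp; omega, ih hL]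
    simp

lemma val_pathRep_syllableProd {s : List α} (hs : s.IsChain (· ≠ ·)) (L : List (α × ℤ)) :
    (pathRep hs (FreeGroup.syllableProd L) : Module.End ℤ (ℕ → ℤ)) = pathProd s L := by
  induction L with
  | nil => simp [FreeGroup.syllableProd, pathProd]
  | cons p L ih =>
    simp only [FreeGroup.syllableProd, pathProd, List.map_cons, List.prod_cons, map_mul,
      Units.val_mul, map_zpow] at ih ⊢
    rw [ih, pathRep, FreeGroup.lift_apply_of, val_pathUnit_zpow]

lemma FreeGroup.syllableProd_notMem_lowerCentralSeries {L : List (α × ℤ)}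
    (hL : FreeGroup.IsReducedSyllables L) (hne : L ≠ []) :
    FreeGroup.syllableProd L ∉ (⊤ : Subgroup (FreeGroup α)).lowerCentralSeries L.length := by
  intro hmem
  have hD := (tailFiltration ℤ ℤ).lowerCentralSeries_le_comap_dimensionSubgroup
    (pathRep_mem hL.1) _ hmem
  have h := apply_eq_self_of_mem_dimensionSubgroup hD (f := Pi.single L.length 1) (i := 0)
    fun j hj => Pi.single_eq_of_ne (by omega) _
  rw [val_pathRep_syllableProd, ← zero_add L.length, pathProd_apply_single _ _ (by simp),
    Pi.single_eq_of_ne (by simpa [eq_comm] using hne)] at h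
  exact List.prod_ne_zero (by simpa using fun x hx => hL.2 (x, 0) hx rfl) h

end PathRepresentation

/-- Every free group is residually nilpotent. -/
theorem stmt9 (α : Type*) :
    (⨅ n : ℕ, (⊤ : Subgroup (FreeGroup α)).lowerCentralSeries n) = ⊥ := by
  classical
  refine (Subgroup.eq_bot_iff_forall _).2 fun g hg => ?_
  obtain ⟨L, hL, rfl⟩ := FreeGroup.exists_isReducedSyllables g
  rcases eq_or_ne L [] with rfl | hne
  · rfl
  · exact (FreeGroup.syllableProd_notMem_lowerCentralSeries hL hne (Subgroup.mem_iInf.1 hg _)).elim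
end

section
/- For any group G, if the ω-th Lie power Δ^{(ω)}(G) of the augmentation ideal is zero, then V(ZG) is residually nilpotent; more precisely, γ_n(V(ZG)) − 1 ⊆ Δ^{(n)}(G) for all n ≥ 1, so ⋂_n Δ^{(n)}(G) = 0 implies ⋂_n γ_n(V(ZG)) = 1. -/
noncomputable def aug (G : Type*) [Group G] : MonoidAlgebra ℤ G →+* ℤ :=
  ((MonoidAlgebra.lift ℤ ℤ G) 1).toRingHom

noncomputable def V (G : Type*) [Group G] : Subgroup (MonoidAlgebra ℤ G)ˣ :=
  (Units.map (aug G).toMonoidHom).ker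

noncomputable def embedV (G : Type*) [Group G] : G →* V G :=
  ((Units.map (MonoidAlgebra.of ℤ G)).comp (toUnits : G ≃* Gˣ).toMonoidHom).codRestrict (V G)
    (by
      intro g
      simp [V, aug, MonoidHom.mem_ker, Units.ext_iff, MonoidAlgebra.lift_of])

/-- Lie powers of the augmentation ideal: LiePower G k is Δ^{(k+1)}(G), i.e.
LiePower G 0 = Δ(G) and LiePower G (k+1) = [Δ(G), LiePower G k]·ℤG (the additive
subgroup generated by Lie brackets multiplied on the right by ℤG). -/
noncomputable def LiePower (G : Type*) [Group G] : ℕ → AddSubgroup (MonoidAlgebra ℤ G)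
  | 0 => (RingHom.ker (aug G)).toAddSubgroup
  | (k+1) => AddSubgroup.closure
      {x | ∃ a ∈ RingHom.ker (aug G), ∃ b ∈ LiePower G k,
        ∃ r : MonoidAlgebra ℤ G, x = (a * b - b * a) * r}


lemma LiePower_mul_mem (G : Type*) [Group G] :
    ∀ k : ℕ, ∀ x ∈ LiePower G k, ∀ r : MonoidAlgebra ℤ G, x * r ∈ LiePower G k := by
  intro k
  induction k with
  | zero =>
    intro x hx r
    have hx' : aug G x = 0 := hx
    show aug G (x * r) = 0
    rw [map_mul, hx', zero_mul]
  | succ k ih =>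
    intro x hx r
    have : x * r ∈ (LiePower G (k+1)).map (AddMonoidHom.mulRight r) :=
      AddSubgroup.mem_map_of_mem _ hx
    have hmap : (LiePower G (k+1)).map (AddMonoidHom.mulRight r) ≤ LiePower G (k+1) := by
      show AddSubgroup.map _ (AddSubgroup.closure _) ≤ _
      rw [AddMonoidHom.map_closure]
      refine (AddSubgroup.closure_le _).mpr ?_
      rintro y ⟨z, ⟨a, ha, b, hb, s, rfl⟩, rfl⟩
      apply AddSubgroup.subset_closure
      exact ⟨a, ha, b, hb, s * r, by simp [AddMonoidHom.mulRight, mul_assoc]⟩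
    exact hmap this

noncomputable def Hsub (G : Type*) [Group G] (n : ℕ) : Subgroup (V G) where
  carrier := {u | ((u : (MonoidAlgebra ℤ G)ˣ) : MonoidAlgebra ℤ G) - 1 ∈ LiePower G n}
  one_mem' := by simpa using (LiePower G n).zero_mem
  mul_mem' := by
    intro u v hu hv
    have key : ((((u*v : V G) : (MonoidAlgebra ℤ G)ˣ)) : MonoidAlgebra ℤ G) - 1
        = (((u : (MonoidAlgebra ℤ G)ˣ)) - 1) * ((v : (MonoidAlgebra ℤ G)ˣ))
          + ((((v : (MonoidAlgebra ℤ G)ˣ)) : MonoidAlgebra ℤ G) - 1) := by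
      push_cast
      noncomm_ring
    rw [Set.mem_setOf_eq, key]
    exact (LiePower G n).add_mem (LiePower_mul_mem G n _ hu _) hv
  inv_mem' := by
    intro u hu
    have h1 : ((u : (MonoidAlgebra ℤ G)ˣ) : MonoidAlgebra ℤ G) *
        (((u : (MonoidAlgebra ℤ G)ˣ))⁻¹ : (MonoidAlgebra ℤ G)ˣ) = 1 := by
      rw [← Units.val_mul, mul_inv_cancel, Units.val_one]
    have key : ((((u⁻¹ : V G) : (MonoidAlgebra ℤ G)ˣ)) : MonoidAlgebra ℤ G) - 1
        = (-(((u : (MonoidAlgebra ℤ G)ˣ) : MonoidAlgebra ℤ G) - 1)) *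
          (((u : (MonoidAlgebra ℤ G)ˣ))⁻¹ : (MonoidAlgebra ℤ G)ˣ) := by
      push_cast
      rw [neg_sub, sub_mul, h1, one_mul]
    rw [Set.mem_setOf_eq, key]
    exact LiePower_mul_mem G n _ ((LiePower G n).neg_mem hu) _

lemma aug_V (G : Type*) [Group G] (u : V G) :
    aug G ((u : (MonoidAlgebra ℤ G)ˣ) : MonoidAlgebra ℤ G) = 1 := by
  have h : Units.map (aug G).toMonoidHom (u : (MonoidAlgebra ℤ G)ˣ) = 1 := u.2
  rw [Units.ext_iff] at h
  simpa using h

lemma lcs_le_Hsub (G : Type*) [Group G] :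
    ∀ n : ℕ, Subgroup.lowerCentralSeries (⊤ : Subgroup (V G)) n ≤ Hsub G n := by
  intro n
  induction n with
  | zero =>
    intro u _
    show _ ∈ LiePower G 0
    show _ ∈ RingHom.ker (aug G)
    rw [RingHom.mem_ker, map_sub, map_one, aug_V, sub_self]
  | succ n ih =>
    rw [Subgroup.lowerCentralSeries_succ, Subgroup.commutator_def]
    apply Subgroup.closure_le (Hsub G (n+1)) |>.mpr
    rintro x ⟨p, hp, q, -, rfl⟩
    have hb : ((p : (MonoidAlgebra ℤ G)ˣ) : MonoidAlgebra ℤ G) - 1 ∈ LiePower G n := ih hp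
    have ha : ((q : (MonoidAlgebra ℤ G)ˣ) : MonoidAlgebra ℤ G) - 1 ∈ RingHom.ker (aug G) := by
      rw [RingHom.mem_ker, map_sub, map_one, aug_V, sub_self]
    set P : MonoidAlgebra ℤ G := ((p : (MonoidAlgebra ℤ G)ˣ) : MonoidAlgebra ℤ G)
    set Q : MonoidAlgebra ℤ G := ((q : (MonoidAlgebra ℤ G)ˣ) : MonoidAlgebra ℤ G)
    set Pi : MonoidAlgebra ℤ G := ((((p : (MonoidAlgebra ℤ G)ˣ))⁻¹ : (MonoidAlgebra ℤ G)ˣ) : MonoidAlgebra ℤ G)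
    set Qi : MonoidAlgebra ℤ G := ((((q : (MonoidAlgebra ℤ G)ˣ))⁻¹ : (MonoidAlgebra ℤ G)ˣ) : MonoidAlgebra ℤ G)
    have hP : P * Pi = 1 := by rw [← Units.val_mul, mul_inv_cancel, Units.val_one]
    have hQ : Q * Qi = 1 := by rw [← Units.val_mul, mul_inv_cancel, Units.val_one]
    show (((p * q * p⁻¹ * q⁻¹ : V G) : (MonoidAlgebra ℤ G)ˣ) : MonoidAlgebra ℤ G) - 1
      ∈ LiePower G (n+1)
    have hval : (((p * q * p⁻¹ * q⁻¹ : V G) : (MonoidAlgebra ℤ G)ˣ) : MonoidAlgebra ℤ G)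
        = P * Q * Pi * Qi := by push_cast; rfl
    have key : P * Q * Pi * Qi - 1
        = ((Q - 1) * (P - 1) - (P - 1) * (Q - 1)) * (-(Pi * Qi)) := by
      have expand : ((Q - 1) * (P - 1) - (P - 1) * (Q - 1)) * (-(Pi * Qi))
          = P * Q * Pi * Qi - Q * (P * Pi) * Qi := by noncomm_ring
      rw [expand, hP, mul_one, hQ]
    rw [hval, key]
    show _ ∈ AddSubgroup.closure _
    exact AddSubgroup.subset_closure ⟨_, ha, _, hb, _, rfl⟩

/-- γ_{n+1}(V(ℤG)) − 1 ⊆ Δ^{(n+1)}(G) for all n; consequently, if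
⋂ₖ Δ^{(k)}(G) = 0 then V(ℤG) is residually nilpotent. -/
theorem stmt10 (G : Type*) [Group G] :
    (∀ n : ℕ, ∀ u : V G, u ∈ Subgroup.lowerCentralSeries (⊤ : Subgroup (V G)) n →
      ((u : (MonoidAlgebra ℤ G)ˣ) : MonoidAlgebra ℤ G) - 1 ∈ LiePower G n) ∧
    ((∀ x : MonoidAlgebra ℤ G, (∀ k : ℕ, x ∈ LiePower G k) → x = 0) →
      (⨅ n : ℕ, Subgroup.lowerCentralSeries (⊤ : Subgroup (V G)) n) = ⊥) := by
  constructor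
  · intro n u hu
    exact lcs_le_Hsub G n hu
  · intro hx
    rw [eq_bot_iff]
    intro u hu
    simp only [Subgroup.mem_iInf] at hu
    have h0 : ((u : (MonoidAlgebra ℤ G)ˣ) : MonoidAlgebra ℤ G) - 1 = 0 :=
      hx _ (fun k => lcs_le_Hsub G k (hu k))
    have h1 : ((u : (MonoidAlgebra ℤ G)ˣ) : MonoidAlgebra ℤ G) = 1 := by
      rwa [sub_eq_zero] at h0
    exact Subgroup.mem_bot.mpr (Subtype.ext (Units.ext h1))
end
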